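/- arXiv:1511.03936 — 2 statements merged into one kernel-verified Lean document; each statement's English description precedes it below -/
import Mathlib

section
/- For any monomial X = X_{μ1}···X_{μk} in U(g) ⊂ U(g^L), shifting X_μ to the far right yields X_μ · X = Σ_α (T_{μα} ▷ X) · X_α, where ▷ is the left action of U(g^L) on U(g). -/
open UniversalEnvelopingAlgebra

/-!
Commuting `X_μ` past the first letter `X_λ` of the monomial costs `[X_μ, X_λ] = Σ_β C_{μλβ} X_β`,
and by induction each of the two resulting monomials is shifted as claimed. The coproduct rule
for `T` applied to `X_λ · P`, with `T_{μγ} ▷ X_λ = δ_{μγ} X_λ + C_{μλγ}`, reassembles exactly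
these two contributions.
-/

section ShiftGenerator

variable {K A : Type*} [CommSemiring K] [Semiring A] [Algebra K A] {n : ℕ}
  (x : Fin n → A) (C : Fin n → Fin n → Fin n → K) (T : Fin n → Fin n → A → A)

theorem act_generator_mul
    (hTmul : ∀ μ ν a c, T μ ν (a * c) = ∑ α, T μ α a * T α ν c)
    (hTx : ∀ μ γ lam, T μ γ (x lam) = (if μ = γ then x lam else 0) + C μ lam γ • 1)
    (μ α lam : Fin n) (P : A) :
    T μ α (x lam * P) = x lam * T μ α P + ∑ γ, C μ lam γ • T γ α P := by
  simp only [hTmul, hTx, add_mul, ite_mul, zero_mul, smul_mul_assoc, one_mul,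
    Finset.sum_add_distrib, Finset.sum_ite_eq, Finset.mem_univ, if_true]

theorem mul_list_prod_map_eq_sum_act_mul
    (hT1 : ∀ μ ν, T μ ν 1 = if μ = ν then 1 else 0)
    (hTmul : ∀ μ ν a c, T μ ν (a * c) = ∑ α, T μ α a * T α ν c)
    (hTx : ∀ μ γ lam, T μ γ (x lam) = (if μ = γ then x lam else 0) + C μ lam γ • 1)
    (hcomm : ∀ μ lam, x μ * x lam = x lam * x μ + ∑ β, C μ lam β • x β)
    (μ : Fin n) (l : List (Fin n)) :
    x μ * (l.map x).prod = ∑ α, T μ α (l.map x).prod * x α := by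
  induction l generalizing μ with
  | nil => simp [hT1]
  | cons lam rest ih =>
    set P := (rest.map x).prod
    calc x μ * (x lam * P)
        = x lam * (x μ * P) + ∑ β, C μ lam β • (x β * P) := by
          rw [← mul_assoc, hcomm, add_mul, mul_assoc, Finset.sum_mul]
          simp only [smul_mul_assoc]
      _ = x lam * ∑ α, T μ α P * x α + ∑ β, C μ lam β • ∑ α, T β α P * x α := by
          simp only [ih]
      _ = ∑ α, T μ α (x lam * P) * x α := by
          simp only [act_generator_mul x C T hTmul hTx, add_mul, Finset.sum_mul,
            smul_mul_assoc, Finset.sum_add_distrib, Finset.mul_sum, Finset.smul_sum, mul_assoc]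
          rw [Finset.sum_comm]

end ShiftGenerator

theorem UniversalEnvelopingAlgebra.ι_mul_ι (R : Type*) {L : Type*} [CommRing R] [LieRing L]
    [LieAlgebra R L] (y z : L) : ι R y * ι R z = ι R z * ι R y + ι R ⁅y, z⁆ := by
  simp only [LieHom.map_lie, Ring.lie_def, add_sub_cancel]

theorem UniversalEnvelopingAlgebra.apply_ι_eq_mul_apply_one_add
    {R L A : Type*} [CommRing R] [LieRing L] [LieAlgebra R L] [Ring A] [Algebra R A]
    (ψ : UniversalEnvelopingAlgebra R L →ₐ[R] Module.End R A) {x : L} {a : A}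
    (hx : ψ (ι R x) = LinearMap.mulLeft R a) (t : L) :
    ψ (ι R t) a = a * ψ (ι R t) 1 + ψ (ι R ⁅t, x⁆) 1 := by
  have h := congrArg (fun u => ψ u 1) (ι_mul_ι R t x)
  simpa only [map_mul, map_add, Module.End.mul_apply, LinearMap.add_apply, hx,
    LinearMap.mulLeft_apply, mul_one] using h

theorem stmt5_general {K : Type*} [Field K] {n : ℕ}
    {g : Type*} [LieRing g] [LieAlgebra K g] (b : Module.Basis (Fin n) K g)
    {gL : Type*} [LieRing gL] [LieAlgebra K gL]
    (bL : Module.Basis (Fin n ⊕ Fin n × Fin n) K gL)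
    (C : Fin n → Fin n → Fin n → K)
    (hg : ∀ μ ν, ⁅b μ, b ν⁆ = ∑ α, C μ ν α • b α)
    (hTX : ∀ μ ν lam, ⁅bL (Sum.inr (μ, ν)), bL (Sum.inl lam)⁆
        = ∑ α, C μ lam α • bL (Sum.inr (α, ν)))
    (φ : UniversalEnvelopingAlgebra K gL →ₐ[K]
        Module.End K (UniversalEnvelopingAlgebra K g))
    (hφX : ∀ μ, φ (ι K (bL (Sum.inl μ))) = LinearMap.mulLeft K (ι K (b μ)))
    (hφT1 : ∀ μ ν, φ (ι K (bL (Sum.inr (μ, ν)))) 1 = if μ = ν then 1 else 0)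
    (hφTmul : ∀ μ ν (x y : UniversalEnvelopingAlgebra K g),
        φ (ι K (bL (Sum.inr (μ, ν)))) (x * y)
          = ∑ α, φ (ι K (bL (Sum.inr (μ, α)))) x * φ (ι K (bL (Sum.inr (α, ν)))) y) :
    ∀ (μ : Fin n) (l : List (Fin n)),
      ι K (b μ) * (l.map fun i => ι K (b i)).prod
        = ∑ α, φ (ι K (bL (Sum.inr (μ, α)))) ((l.map fun i => ι K (b i)).prod)
            * ι K (b α) := by
  have hTx : ∀ μ γ lam, φ (ι K (bL (Sum.inr (μ, γ)))) (ι K (b lam))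
      = (if μ = γ then ι K (b lam) else 0) + C μ lam γ • 1 := by
    intro μ γ lam
    rw [apply_ι_eq_mul_apply_one_add φ (hφX lam), hTX]
    simp only [map_sum, map_smul, LinearMap.sum_apply, LinearMap.smul_apply, hφT1, smul_ite,
      smul_zero, Finset.sum_ite_eq', Finset.mem_univ, if_true, mul_ite, mul_one, mul_zero]
  have hcomm : ∀ μ lam, ι K (b μ) * ι K (b lam)
      = ι K (b lam) * ι K (b μ) + ∑ β, C μ lam β • ι K (b β) := by
    intro μ lam
    rw [ι_mul_ι, hg, map_sum]
    simp only [map_smul]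
  exact mul_list_prod_map_eq_sum_act_mul (fun i => ι K (b i)) C
    (fun μ ν => φ (ι K (bL (Sum.inr (μ, ν))))) hφT1 hφTmul hTx hcomm

/-- for any monomial `X = X_{μ1}⋯X_{μk}` in `U(g)`, shifting `X_μ` to the far
right gives `X_μ X = Σ_α (T_{μα} ▷ X) X_α`, where `▷` is the left action of `U(g^L)` on
`U(g)` (encoded by an algebra map `φ` with its defining properties). -/
theorem stmt5 {K : Type*} [Field K] {n : ℕ}
    {g : Type*} [LieRing g] [LieAlgebra K g] (b : Module.Basis (Fin n) K g)
    {gL : Type*} [LieRing gL] [LieAlgebra K gL]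
    (bL : Module.Basis (Fin n ⊕ Fin n × Fin n) K gL)
    (C : Fin n → Fin n → Fin n → K)
    (hg : ∀ μ ν, ⁅b μ, b ν⁆ = ∑ α, C μ ν α • b α)
    (hXX : ∀ μ ν, ⁅bL (Sum.inl μ), bL (Sum.inl ν)⁆ = ∑ α, C μ ν α • bL (Sum.inl α))
    (hTT : ∀ μ ν α β, ⁅bL (Sum.inr (μ, ν)), bL (Sum.inr (α, β))⁆ = 0)
    (hTX : ∀ μ ν lam, ⁅bL (Sum.inr (μ, ν)), bL (Sum.inl lam)⁆
        = ∑ α, C μ lam α • bL (Sum.inr (α, ν)))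
    (φ : UniversalEnvelopingAlgebra K gL →ₐ[K]
        Module.End K (UniversalEnvelopingAlgebra K g))
    (hφX : ∀ μ, φ (ι K (bL (Sum.inl μ))) = LinearMap.mulLeft K (ι K (b μ)))
    (hφT1 : ∀ μ ν, φ (ι K (bL (Sum.inr (μ, ν)))) 1 = if μ = ν then 1 else 0)
    (hφTmul : ∀ μ ν (x y : UniversalEnvelopingAlgebra K g),
        φ (ι K (bL (Sum.inr (μ, ν)))) (x * y)
          = ∑ α, φ (ι K (bL (Sum.inr (μ, α)))) x * φ (ι K (bL (Sum.inr (α, ν)))) y) :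
    ∀ (μ : Fin n) (l : List (Fin n)),
      ι K (b μ) * (l.map fun i => ι K (b i)).prod
        = ∑ α, φ (ι K (bL (Sum.inr (μ, α)))) ((l.map fun i => ι K (b i)).prod)
            * ι K (b α) :=
  stmt5_general b bL C hg hTX φ hφX hφT1 hφTmul
end

section
/- In the Weyl algebra completion, the dual κ-deformed generators ŷ_μ = x_μ A/(1-e^{-A}) + ia_μ(x·∂)(1/A - 1/(1-e^{-A})) commute with the generators x̂_μ = x_μ A/(e^A-1) + ia_μ(x·∂)(1/A - 1/(e^A-1)): [x̂_μ, ŷ_ν] = 0 for all μ, ν, and the ŷ's satisfy [ŷ_μ, ŷ_ν] = -i(a_μ ŷ_ν - a_ν ŷ_μ). -/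
/-!
Every operator in sight is a power series in `A = i a·∂`. Since `A` lowers the total degree,
the series `f(A)` terminates on each polynomial, and `f ↦ f(A)` is an algebra homomorphism on
`ℂ⟦t⟧`. From `[A, x_ν] = i a_ν` and `[A, x·∂] = A` one gets `[f(A), x_ν] = i a_ν f'(A)` and
`[f(A), x·∂] = (t f')(A)`, so the commutator of two operators `x_μ f(A) + i a_μ (x·∂) g(A)`
is again of this shape, with coefficients that are explicit power series in `f, g, f', g'`.
For `K = t/(e^t-1)`, `G = t/(1-e^{-t}) = K + t`, `S = (1-K)/t` and `U = (1-G)/t` these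
coefficients vanish (resp. reproduce `G`) because of `K' = U K`, the logarithmic derivative
of `K (e^t - 1) = t`.
-/

noncomputable section

open MvPolynomial

variable {n : ℕ}

/-- multiplication by `x_μ` as an operator on polynomials. -/
def xop (μ : Fin n) : Module.End ℂ (MvPolynomial (Fin n) ℂ) :=
  LinearMap.mulLeft ℂ (MvPolynomial.X μ)

/-- the partial derivative `∂_μ` as an operator on polynomials. -/
def dop (μ : Fin n) : Module.End ℂ (MvPolynomial (Fin n) ℂ) :=
  (MvPolynomial.pderiv μ).toLinearMap

/-- the operator `A = i a·∂`. -/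
def Aop (a : Fin n → ℂ) : Module.End ℂ (MvPolynomial (Fin n) ℂ) :=
  ∑ α, (Complex.I * a α) • dop α

/-- the operator `x·∂ = Σ_α x_α ∂_α`. -/
def xdop : Module.End ℂ (MvPolynomial (Fin n) ℂ) := ∑ α : Fin n, xop α * dop α

namespace Polynomial

section

variable {S R : Type*} [CommSemiring S] [Semiring R] [Algebra S R]

theorem commute_aeval_of_commute {A B : R} (h : Commute A B) (P : S[X]) :
    Commute B (aeval A P) := by
  rw [aeval_eq_sum_range]
  exact Commute.sum_right _ _ _ fun i _ => (h.symm.pow_right i).smul_right _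

theorem aeval_mul_eq_of_mul_eq_add {A B y : R} (hAB : Commute A B) (hy : A * y = y * A + B)
    (P : S[X]) : aeval A P * y = y * aeval A P + B * aeval A (derivative P) := by
  induction P using Polynomial.induction_on with
  | C c => simp [Algebra.commutes]
  | add P Q hP hQ =>
    simp only [map_add, add_mul, mul_add, hP, hQ]
    abel
  | monomial k c ih =>
    rw [pow_succ, ← mul_assoc]
    generalize C c * X ^ k = P at ih ⊢
    rw [derivative_mul, derivative_X, map_add, map_mul, map_mul, aeval_X,
      mul_one, mul_assoc, hy, mul_add, ← mul_assoc, ih, mul_add, ← mul_assoc B,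
      (commute_aeval_of_commute hAB P).eq, (commute_aeval_of_commute hAB (derivative P)).eq]
    noncomm_ring

end

theorem aeval_apply_eq_of_coeff_eq {R M : Type*} [CommRing R] [AddCommGroup M] [Module R M]
    {A : Module.End R M} {N : ℕ} {v : M} (hv : (A ^ N) v = 0) {P Q : R[X]}
    (h : ∀ m < N, P.coeff m = Q.coeff m) : aeval A P v = aeval A Q v := by
  obtain ⟨D, hD⟩ : X ^ N ∣ P - Q := X_pow_dvd_iff.mpr fun m hm => by simp [h m hm]
  rw [← sub_eq_zero, ← LinearMap.sub_apply, ← map_sub, hD, mul_comm, map_mul,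
    Module.End.mul_apply, map_pow, aeval_X, hv, map_zero]

end Polynomial

namespace Module.End

variable {R M : Type*} [CommRing R] [AddCommGroup M] [Module R M]

theorem pow_succ_apply_eq_zero_of_mul_eq_add {A B y : Module.End R M} (hAB : Commute A B)
    (hy : A * y = y * A + B) {N : ℕ} {v : M} (hv : (A ^ N) v = 0) : (A ^ (N + 1)) (y v) = 0 := by
  have h := congr($(Polynomial.aeval_mul_eq_of_mul_eq_add hAB hy
    (Polynomial.X ^ (N + 1) : Polynomial R)) v)
  simp only [map_pow, Polynomial.aeval_X, Polynomial.derivative_X_pow, map_mul, Polynomial.aeval_C,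
    Nat.add_sub_cancel, mul_apply] at h
  rw [h]
  simp [pow_succ', hv]

theorem pow_apply_aeval_apply_eq_zero {A : Module.End R M} {N : ℕ} {v : M} (hv : (A ^ N) v = 0)
    (P : Polynomial R) : (A ^ N) (Polynomial.aeval A P v) = 0 := by
  rw [← mul_apply, ((Polynomial.commute_aeval_of_commute (Commute.refl A) P).pow_left N).eq,
    mul_apply, hv, map_zero]

end Module.End

namespace PowerSeries

variable {R : Type*} [CommRing R]

def divX (φ : R⟦X⟧) : R⟦X⟧ := mk fun m => coeff (m + 1) φ

theorem X_mul_divX_one_sub {φ : R⟦X⟧} (hφ : constantCoeff φ = 1) : X * divX (1 - φ) = 1 - φ := by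
  conv_rhs => rw [eq_X_mul_shift_add_const (1 - φ)]
  simp [divX, hφ]

variable (𝕜 : Type*) [Field 𝕜] [CharZero 𝕜]

theorem exp_sub_one_ne_zero : exp 𝕜 - 1 ≠ 0 := fun h => by
  simpa using congr(coeff 1 $h)

theorem bernoulli'PowerSeries_eq_add_X : bernoulli'PowerSeries 𝕜 = bernoulliPowerSeries 𝕜 + X := by
  refine mul_right_cancel₀ (exp_sub_one_ne_zero 𝕜) ?_
  rw [bernoulli'PowerSeries_mul_exp_sub_one, add_mul, bernoulliPowerSeries_mul_exp_sub_one]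
  ring

theorem constantCoeff_bernoulliPowerSeries : constantCoeff (bernoulliPowerSeries 𝕜) = 1 := by
  simp [bernoulliPowerSeries]

theorem constantCoeff_bernoulli'PowerSeries : constantCoeff (bernoulli'PowerSeries 𝕜) = 1 := by
  simp [bernoulli'PowerSeries]

theorem derivative_bernoulliPowerSeries :
    d⁄dX 𝕜 (bernoulliPowerSeries 𝕜)
      = divX (1 - bernoulli'PowerSeries 𝕜) * bernoulliPowerSeries 𝕜 := by
  have hU := X_mul_divX_one_sub (constantCoeff_bernoulli'PowerSeries 𝕜)
  have hG := bernoulli'PowerSeries_eq_add_X 𝕜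
  set G := bernoulli'PowerSeries 𝕜
  set K := bernoulliPowerSeries 𝕜
  have hK : K * (exp 𝕜 - 1) = X := bernoulliPowerSeries_mul_exp_sub_one 𝕜
  have hK' : d⁄dX 𝕜 K * (exp 𝕜 - 1) + K * exp 𝕜 = 1 := by
    simpa [Derivation.leibniz, derivative_exp, add_comm, mul_comm] using congr(d⁄dX 𝕜 $hK)
  refine mul_left_cancel₀ X_ne_zero (mul_right_cancel₀ (exp_sub_one_ne_zero 𝕜) ?_)
  linear_combination X * hK' - K * (exp 𝕜 - 1) * hU + (G - 1 - X) * hK + X * hG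

theorem derivative_bernoulli'PowerSeries :
    d⁄dX 𝕜 (bernoulli'PowerSeries 𝕜)
      = (divX (1 - bernoulli'PowerSeries 𝕜) + 1) * bernoulli'PowerSeries 𝕜 := by
  have hU := X_mul_divX_one_sub (constantCoeff_bernoulli'PowerSeries 𝕜)
  have hK := derivative_bernoulliPowerSeries 𝕜
  have hG := bernoulli'PowerSeries_eq_add_X 𝕜
  have hG' : d⁄dX 𝕜 (bernoulli'PowerSeries 𝕜) = d⁄dX 𝕜 (bernoulliPowerSeries 𝕜) + 1 := by
    rw [hG, map_add, derivative_X]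
  set U := divX (1 - bernoulli'PowerSeries 𝕜)
  linear_combination hG' + hK - U * hG - hU

theorem mk_bernoulli_div_factorial :
    mk (fun m => (bernoulli m : 𝕜) / (m.factorial : 𝕜)) = bernoulliPowerSeries 𝕜 := by
  ext m
  simp [bernoulliPowerSeries]

theorem mk_neg_one_pow_mul_bernoulli_div_factorial :
    mk (fun m => (-1 : 𝕜) ^ m * (bernoulli m : 𝕜) / (m.factorial : 𝕜))
      = bernoulli'PowerSeries 𝕜 := by
  ext m
  simp [bernoulli'PowerSeries, bernoulli, ← mul_assoc, ← mul_pow]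

theorem mk_neg_bernoulli_succ_div_factorial :
    mk (fun m => -((bernoulli (m + 1) : 𝕜) / ((m + 1).factorial : 𝕜)))
      = divX (1 - bernoulliPowerSeries 𝕜) := by
  ext m
  simp [divX, bernoulliPowerSeries]

theorem mk_neg_one_pow_mul_bernoulli_succ_div_factorial :
    mk (fun m => (-1 : 𝕜) ^ m * (bernoulli (m + 1) : 𝕜) / ((m + 1).factorial : 𝕜))
      = divX (1 - bernoulli'PowerSeries 𝕜) := by
  ext m
  simp [divX, bernoulli'PowerSeries, bernoulli, ← mul_assoc, ← mul_pow, pow_succ, neg_div]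

end PowerSeries

theorem Derivation.sum_apply {ι R A M : Type*} [CommSemiring R] [CommSemiring A] [Algebra R A]
    [AddCommMonoid M] [Module A M] [Module R M] (s : Finset ι) (D : ι → Derivation R A M) (x : A) :
    (∑ i ∈ s, D i) x = ∑ i ∈ s, D i x := by
  simp [← Derivation.coeFnAddMonoidHom_apply, map_sum]

section Operators

variable (a : Fin n → ℂ)

theorem Aop_apply (p : MvPolynomial (Fin n) ℂ) :
    Aop a p = ∑ α, (Complex.I * a α) • pderiv α p := by
  simp [Aop, dop]

theorem xdop_apply (p : MvPolynomial (Fin n) ℂ) : xdop p = ∑ α : Fin n, X α * pderiv α p := by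
  simp [xdop, xop, dop]

theorem Aop_mul_xop (ν : Fin n) : Aop a * xop ν = xop ν * Aop a + (Complex.I * a ν) • 1 := by
  refine LinearMap.ext fun p => ?_
  simp [Aop_apply, xop, pderiv_X, Pi.single_apply, smul_add, Finset.sum_add_distrib]

theorem Aop_mul_xdop : Aop a * xdop = xdop * Aop a + Aop a := by
  let D : Derivation ℂ (MvPolynomial (Fin n) ℂ) (MvPolynomial (Fin n) ℂ) :=
    ∑ α, (Complex.I * a α) • pderiv α
  let E : Derivation ℂ (MvPolynomial (Fin n) ℂ) (MvPolynomial (Fin n) ℂ) :=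
    ∑ α : Fin n, (X α : MvPolynomial (Fin n) ℂ) • pderiv α
  have hD : ∀ p, Aop a p = D p := fun p => by simp [D, Aop_apply, Derivation.sum_apply]
  have hE : ∀ p, xdop p = E p := fun p => by simp [E, xdop_apply, Derivation.sum_apply]
  have hDE : ⁅D, E⁆ = D := derivation_ext fun i => by
    simp [Derivation.commutator_apply, D, E, Derivation.sum_apply, pderiv_X, Pi.single_apply]
  refine LinearMap.ext fun p => ?_
  simpa [hD, hE, Derivation.commutator_apply, sub_eq_iff_eq_add'] using congr($hDE p)

theorem xdop_mul_xop (ν : Fin n) : xdop * xop ν = xop ν * xdop + xop ν := by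
  refine LinearMap.ext fun p => ?_
  simp [xdop_apply, xop, pderiv_X, Pi.single_apply, mul_add, Finset.sum_add_distrib,
    mul_left_comm]

theorem commute_xop (μ ν : Fin n) : Commute (xop μ) (xop ν) :=
  LinearMap.ext fun p => by
    simp only [Module.End.mul_apply, xop, LinearMap.mulLeft_apply]
    ring

theorem Aop_pow_add_apply_X_pow_mul {N : ℕ} {q : MvPolynomial (Fin n) ℂ}
    (hq : (Aop a ^ N) q = 0) (i : Fin n) (b : ℕ) : (Aop a ^ (N + b)) (X i ^ b * q) = 0 := by
  induction b with
  | zero => simpa using hq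
  | succ b ih =>
    rw [pow_succ', mul_assoc, ← add_assoc]
    exact Module.End.pow_succ_apply_eq_zero_of_mul_eq_add
      ((Commute.one_right _).smul_right _) (Aop_mul_xop a i) ih

theorem Aop_pow_degree_succ_apply_monomial (s : Fin n →₀ ℕ) (c : ℂ) :
    (Aop a ^ (s.degree + 1)) (monomial s c) = 0 := by
  induction s using Finsupp.induction generalizing c with
  | zero => simp [Aop_apply]
  | single_add i b s _ _ ih =>
    rw [monomial_single_add, map_add, Finsupp.degree_single, add_comm b, add_right_comm]
    exact Aop_pow_add_apply_X_pow_mul a (ih c) i b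

theorem Aop_pow_totalDegree_succ_apply (p : MvPolynomial (Fin n) ℂ) :
    (Aop a ^ (p.totalDegree + 1)) p = 0 := by
  conv_lhs => enter [2]; rw [p.as_sum]
  refine (map_sum _ _ _).trans (Finset.sum_eq_zero fun s hs => ?_)
  exact Module.End.pow_map_zero_of_le (Nat.succ_le_succ (le_totalDegree hs))
    (Aop_pow_degree_succ_apply_monomial a s _)

end Operators

section SeriesOp

open Polynomial (aeval)
open scoped PowerSeries

variable (a : Fin n → ℂ)

theorem aeval_trunc_totalDegree_succ_apply {f : PowerSeries ℂ} {p : MvPolynomial (Fin n) ℂ}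
    {N : ℕ} (hp : (Aop a ^ N) p = 0) {P : Polynomial ℂ}
    (hP : ∀ m < N, P.coeff m = PowerSeries.coeff m f) :
    aeval (Aop a) (PowerSeries.trunc (p.totalDegree + 1) f) p = aeval (Aop a) P p := by
  refine Polynomial.aeval_apply_eq_of_coeff_eq (N := min N (p.totalDegree + 1)) ?_ fun m hm => ?_
  · rcases min_choice N (p.totalDegree + 1) with h | h <;> rw [h]
    · exact hp
    · exact Aop_pow_totalDegree_succ_apply a p
  · rw [PowerSeries.coeff_trunc, if_pos (lt_min_iff.mp hm).2, hP m (lt_min_iff.mp hm).1]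

theorem aeval_trunc_totalDegree_succ_apply_eq_trunc (f : PowerSeries ℂ)
    {p : MvPolynomial (Fin n) ℂ} {N : ℕ} (hp : (Aop a ^ N) p = 0) :
    aeval (Aop a) (PowerSeries.trunc (p.totalDegree + 1) f) p
      = aeval (Aop a) (PowerSeries.trunc N f) p :=
  aeval_trunc_totalDegree_succ_apply a hp fun m hm => by rw [PowerSeries.coeff_trunc, if_pos hm]

/-- `f(A)` for a formal power series `f`; the series terminates on each polynomial because `A`
lowers the total degree. -/
def seriesOp : PowerSeries ℂ →ₐ[ℂ] Module.End ℂ (MvPolynomial (Fin n) ℂ) :=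
  AlgHom.ofLinearMap
    (LinearMap.mk₂ ℂ (fun f p => aeval (Aop a) (PowerSeries.trunc (p.totalDegree + 1) f) p)
      (fun f g p => by simp)
      (fun c f p => by simp)
      (fun f p q => by
        have hp := Aop_pow_totalDegree_succ_apply a p
        have hq := Aop_pow_totalDegree_succ_apply a q
        set N := (p.totalDegree + 1) + (q.totalDegree + 1)
        replace hp : (Aop a ^ N) p = 0 := Module.End.pow_map_zero_of_le (by omega) hp
        replace hq : (Aop a ^ N) q = 0 := Module.End.pow_map_zero_of_le (by omega) hq
        have hpq : (Aop a ^ N) (p + q) = 0 := by rw [map_add, hp, hq, add_zero]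
        simp only [aeval_trunc_totalDegree_succ_apply_eq_trunc a f hp,
          aeval_trunc_totalDegree_succ_apply_eq_trunc a f hq,
          aeval_trunc_totalDegree_succ_apply_eq_trunc a f hpq, map_add])
      (fun c f p => by
        have hp := Aop_pow_totalDegree_succ_apply a p
        have hcp : (Aop a ^ (p.totalDegree + 1)) (c • p) = 0 := by rw [map_smul, hp, smul_zero]
        simp only [aeval_trunc_totalDegree_succ_apply_eq_trunc a f hcp, map_smul]))
    (LinearMap.ext fun p => by simp)
    (fun f g => LinearMap.ext fun p => by
      have hp := Aop_pow_totalDegree_succ_apply a p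
      set N := p.totalDegree + 1
      have hq := Module.End.pow_apply_aeval_apply_eq_zero hp (PowerSeries.trunc N g)
      simp only [LinearMap.mk₂_apply, Module.End.mul_apply]
      rw [aeval_trunc_totalDegree_succ_apply_eq_trunc a f hq,
        ← Module.End.mul_apply, ← map_mul]
      refine aeval_trunc_totalDegree_succ_apply a hp fun m hm => ?_
      rw [PowerSeries.coeff_mul_eq_coeff_trunc_mul_trunc f g hm, ← Polynomial.coe_mul,
        Polynomial.coeff_coe])

theorem seriesOp_apply (f : PowerSeries ℂ) (p : MvPolynomial (Fin n) ℂ) :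
    seriesOp a f p = aeval (Aop a) (PowerSeries.trunc (p.totalDegree + 1) f) p :=
  rfl

theorem seriesOp_apply_eq_aeval {f : PowerSeries ℂ} {p : MvPolynomial (Fin n) ℂ} {N : ℕ}
    (hp : (Aop a ^ N) p = 0) {P : Polynomial ℂ}
    (hP : ∀ m < N, P.coeff m = PowerSeries.coeff m f) : seriesOp a f p = aeval (Aop a) P p := by
  rw [seriesOp_apply]
  exact aeval_trunc_totalDegree_succ_apply a hp hP

theorem seriesOp_mk_apply (c : ℕ → ℂ) (p : MvPolynomial (Fin n) ℂ) :
    seriesOp a (PowerSeries.mk c) p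
      = ∑ m ∈ Finset.range (p.totalDegree + 1), c m • (Aop a ^ m) p := by
  rw [seriesOp_apply, Polynomial.aeval_eq_sum_range' (PowerSeries.natDegree_trunc_lt _ _),
    LinearMap.sum_apply]
  refine Finset.sum_congr rfl fun m hm => ?_
  rw [PowerSeries.coeff_trunc, if_pos (Finset.mem_range.mp hm), PowerSeries.coeff_mk,
    LinearMap.smul_apply]

theorem seriesOp_X : seriesOp a PowerSeries.X = Aop a := by
  refine LinearMap.ext fun p => ?_
  rw [seriesOp_apply_eq_aeval a (Aop_pow_totalDegree_succ_apply a p) (P := Polynomial.X)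
    fun m _ => by simp [Polynomial.coeff_X, PowerSeries.coeff_X, eq_comm], Polynomial.aeval_X]

theorem seriesOp_mul_of_Aop_mul_eq {b : PowerSeries ℂ} {y : Module.End ℂ (MvPolynomial (Fin n) ℂ)}
    (hy : Aop a * y = y * Aop a + seriesOp a b) (f : PowerSeries ℂ) :
    seriesOp a f * y = y * seriesOp a f + seriesOp a (b * d⁄dX ℂ f) := by
  refine LinearMap.ext fun p => ?_
  have hAB : Commute (Aop a) (seriesOp a b) := seriesOp_X a ▸ (Commute.all _ b).map (seriesOp a)
  have hp := Aop_pow_totalDegree_succ_apply a p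
  set N := p.totalDegree + 1
  have hyp := Module.End.pow_succ_apply_eq_zero_of_mul_eq_add hAB hy hp
  rw [Module.End.mul_apply, seriesOp_apply_eq_aeval a hyp (P := PowerSeries.trunc (N + 1) f)
      fun m hm => by rw [PowerSeries.coeff_trunc, if_pos hm],
    ← Module.End.mul_apply, Polynomial.aeval_mul_eq_of_mul_eq_add hAB hy,
    ← PowerSeries.trunc_derivative, map_mul]
  simp only [LinearMap.add_apply, Module.End.mul_apply]
  rw [seriesOp_apply_eq_aeval a hp (P := PowerSeries.trunc (N + 1) f)
      fun m hm => by rw [PowerSeries.coeff_trunc, if_pos (by omega)],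
    seriesOp_apply_eq_aeval a hp (P := PowerSeries.trunc N (d⁄dX ℂ f))
      fun m hm => by rw [PowerSeries.coeff_trunc, if_pos hm]]

theorem seriesOp_mul_xop (f : PowerSeries ℂ) (ν : Fin n) :
    seriesOp a f * xop ν
      = xop ν * seriesOp a f + (Complex.I * a ν) • seriesOp a (d⁄dX ℂ f) := by
  have hC : seriesOp a (PowerSeries.C (Complex.I * a ν)) = (Complex.I * a ν) • 1 := by
    rw [← PowerSeries.algebraMap_eq, AlgHom.commutes, Algebra.algebraMap_eq_smul_one]
  rw [seriesOp_mul_of_Aop_mul_eq a (hC ▸ Aop_mul_xop a ν), map_mul, hC, smul_one_mul]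

theorem seriesOp_mul_xdop (f : PowerSeries ℂ) :
    seriesOp a f * xdop = xdop * seriesOp a f + seriesOp a (PowerSeries.X * d⁄dX ℂ f) :=
  seriesOp_mul_of_Aop_mul_eq a ((seriesOp_X a).symm ▸ Aop_mul_xdop a) f

end SeriesOp

section Generators

open scoped PowerSeries

variable (a : Fin n → ℂ)

def kappaCoord (μ : Fin n) (f g : ℂ⟦X⟧) : Module.End ℂ (MvPolynomial (Fin n) ℂ) :=
  xop μ * seriesOp a f + (Complex.I * a μ) • (xdop * seriesOp a g)

theorem kappaCoord_mul (μ ν : Fin n) (f g f' g' : ℂ⟦X⟧) :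
    kappaCoord a μ f g * kappaCoord a ν f' g'
      = xop μ * xop ν * seriesOp a (f * f')
        + (Complex.I * a ν) • (xop μ * seriesOp a (d⁄dX ℂ f * f' + PowerSeries.X * d⁄dX ℂ f * g'))
        + (Complex.I * a ν) • (xop μ * xdop * seriesOp a (f * g'))
        + (Complex.I * a μ) • (xop ν * xdop * seriesOp a (g * f'))
        + (Complex.I * a μ) • (xop ν * seriesOp a (g * f'))
        + (Complex.I * a μ * (Complex.I * a ν)) •
            (xdop * seriesOp a (d⁄dX ℂ g * f' + PowerSeries.X * d⁄dX ℂ g * g'))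
        + (Complex.I * a μ * (Complex.I * a ν)) • (xdop * xdop * seriesOp a (g * g')) := by
  have hx : ∀ h (ν : Fin n) (Z : Module.End ℂ (MvPolynomial (Fin n) ℂ)),
      seriesOp a h * (xop ν * Z)
        = xop ν * (seriesOp a h * Z) + (Complex.I * a ν) • (seriesOp a (d⁄dX ℂ h) * Z) := by
    intro h ν Z
    rw [← mul_assoc, seriesOp_mul_xop, add_mul, smul_mul_assoc, mul_assoc]
  have he : ∀ h (Z : Module.End ℂ (MvPolynomial (Fin n) ℂ)),
      seriesOp a h * (xdop * Z)
        = xdop * (seriesOp a h * Z) + seriesOp a (PowerSeries.X * d⁄dX ℂ h) * Z := by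
    intro h Z
    rw [← mul_assoc, seriesOp_mul_xdop, add_mul, mul_assoc]
  have hex : ∀ (Z : Module.End ℂ (MvPolynomial (Fin n) ℂ)),
      xdop * (xop ν * Z) = xop ν * (xdop * Z) + xop ν * Z := by
    intro Z
    rw [← mul_assoc, xdop_mul_xop, add_mul, mul_assoc]
  simp only [kappaCoord, add_mul, mul_add, smul_mul_assoc, mul_smul_comm, mul_assoc, hx, he, hex,
    ← map_mul, map_add, smul_add, smul_smul]
  module

theorem lie_kappaCoord (μ ν : Fin n) (f g f' g' : ℂ⟦X⟧) :
    ⁅kappaCoord a μ f g, kappaCoord a ν f' g'⁆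
      = (Complex.I * a ν) •
          (xop μ * seriesOp a (d⁄dX ℂ f * f' + PowerSeries.X * d⁄dX ℂ f * g' - g' * f))
        - (Complex.I * a μ) •
          (xop ν * seriesOp a (d⁄dX ℂ f' * f + PowerSeries.X * d⁄dX ℂ f' * g - g * f'))
        + (Complex.I * a μ * (Complex.I * a ν)) • (xdop * seriesOp a
            (d⁄dX ℂ g * f' - d⁄dX ℂ g' * f + PowerSeries.X * d⁄dX ℂ g * g'
              - PowerSeries.X * d⁄dX ℂ g' * g)) := by
  rw [Ring.lie_def, kappaCoord_mul, kappaCoord_mul, (commute_xop ν μ).eq, mul_comm f' f,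
    mul_comm g' f, mul_comm f' g, mul_comm g' g]
  simp only [map_add, map_sub, mul_add, mul_sub, smul_add, smul_sub]
  module

theorem lie_kappaCoord_eq_zero_of {f g f' g' : ℂ⟦X⟧} (hf' : f' = f + PowerSeries.X)
    (hg : PowerSeries.X * g = 1 - f) (hg' : PowerSeries.X * g' = 1 - f')
    (hf : d⁄dX ℂ f = g' * f) (μ ν : Fin n) : ⁅kappaCoord a μ f g, kappaCoord a ν f' g'⁆ = 0 := by
  have hgg' : g = g' + 1 :=
    mul_left_cancel₀ PowerSeries.X_ne_zero (by linear_combination hg - hg' + hf')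
  have hdf' : d⁄dX ℂ f' = d⁄dX ℂ f + 1 := by rw [hf', map_add, PowerSeries.derivative_X]
  have hdg : d⁄dX ℂ g = d⁄dX ℂ g' := by rw [hgg', map_add, Derivation.map_one_eq_zero, add_zero]
  have h₁ : d⁄dX ℂ f * f' + PowerSeries.X * d⁄dX ℂ f * g' - g' * f = 0 := by
    linear_combination d⁄dX ℂ f * hg' + hf
  have h₂ : d⁄dX ℂ f' * f + PowerSeries.X * d⁄dX ℂ f' * g - g * f' = 0 := by
    linear_combination d⁄dX ℂ f' * hg + hdf' + hf - f' * hgg' - g' * hf' - hg'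
  have h₃ : d⁄dX ℂ g * f' - d⁄dX ℂ g' * f + PowerSeries.X * d⁄dX ℂ g * g'
      - PowerSeries.X * d⁄dX ℂ g' * g = 0 := by
    linear_combination (f' + PowerSeries.X * g') * hdg + d⁄dX ℂ g' * hf'
      - PowerSeries.X * d⁄dX ℂ g' * hgg'
  rw [lie_kappaCoord, h₁, h₂, h₃]
  simp

theorem lie_kappaCoord_self_of {f g : ℂ⟦X⟧} (hg : PowerSeries.X * g = 1 - f)
    (hf : d⁄dX ℂ f = (g + 1) * f) (μ ν : Fin n) :
    ⁅kappaCoord a μ f g, kappaCoord a ν f g⁆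
      = -((Complex.I * a μ) • kappaCoord a ν f g - (Complex.I * a ν) • kappaCoord a μ f g) := by
  have h₁ : d⁄dX ℂ f * f + PowerSeries.X * d⁄dX ℂ f * g - g * f = f := by
    linear_combination d⁄dX ℂ f * hg + hf
  rw [lie_kappaCoord, h₁, sub_self, zero_add, sub_self, map_zero, mul_zero, smul_zero, add_zero]
  simp only [kappaCoord]
  module

end Generators

/-- the dual κ-deformed generators
`ŷ_μ = x_μ A/(1-e^{-A}) + i a_μ (x·∂)(1/A - 1/(1-e^{-A}))` commute with
`x̂_μ = x_μ A/(e^A-1) + i a_μ (x·∂)(1/A - 1/(e^A-1))`, and satisfy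
`[ŷ_μ, ŷ_ν] = -i(a_μ ŷ_ν - a_ν ŷ_μ)`.  Here `Φ c = Σ_m c_m A^m`, with
`A/(e^A-1) = Σ (B_m/m!) A^m`, `A/(1-e^{-A}) = Σ ((-1)^m B_m/m!) A^m`,
`1/A - 1/(e^A-1) = -Σ (B_{m+1}/(m+1)!) A^m`,
`1/A - 1/(1-e^{-A}) = Σ ((-1)^m B_{m+1}/(m+1)!) A^m` (`B₁ = -1/2` convention). -/
theorem stmt19 (a : Fin n → ℂ)
    (Φ : (ℕ → ℂ) → Module.End ℂ (MvPolynomial (Fin n) ℂ))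
    (hΦ : ∀ (c : ℕ → ℂ) (p : MvPolynomial (Fin n) ℂ),
      Φ c p = ∑ m ∈ Finset.range (p.totalDegree + 1), c m • ((Aop a ^ m) p))
    (T S T' S' : Module.End ℂ (MvPolynomial (Fin n) ℂ))
    (hT : T = Φ fun m => (bernoulli m : ℂ) / (m.factorial : ℂ))
    (hS : S = Φ fun m => -((bernoulli (m + 1) : ℂ) / ((m + 1).factorial : ℂ)))
    (hT' : T' = Φ fun m => (-1 : ℂ) ^ m * (bernoulli m : ℂ) / (m.factorial : ℂ))
    (hS' : S' = Φ fun m => (-1 : ℂ) ^ m * (bernoulli (m + 1) : ℂ) / ((m + 1).factorial : ℂ))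
    (xhat yhat : Fin n → Module.End ℂ (MvPolynomial (Fin n) ℂ))
    (hxhat : ∀ μ, xhat μ = xop μ * T + (Complex.I * a μ) • (xdop * S))
    (hyhat : ∀ μ, yhat μ = xop μ * T' + (Complex.I * a μ) • (xdop * S')) :
    (∀ μ ν, ⁅xhat μ, yhat ν⁆ = 0)
    ∧ ∀ μ ν, ⁅yhat μ, yhat ν⁆
        = -((Complex.I * a μ) • yhat ν - (Complex.I * a ν) • yhat μ) := by
  have hΦ' : ∀ c, Φ c = seriesOp a (PowerSeries.mk c) := fun c =>
    LinearMap.ext fun p => (hΦ c p).trans (seriesOp_mk_apply a c p).symm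
  rw [hΦ', PowerSeries.mk_bernoulli_div_factorial] at hT
  rw [hΦ', PowerSeries.mk_neg_bernoulli_succ_div_factorial] at hS
  rw [hΦ', PowerSeries.mk_neg_one_pow_mul_bernoulli_div_factorial] at hT'
  rw [hΦ', PowerSeries.mk_neg_one_pow_mul_bernoulli_succ_div_factorial] at hS'
  have hx : ∀ μ, xhat μ = kappaCoord a μ _ _ := fun μ => by rw [hxhat, hT, hS]; rfl
  have hy : ∀ μ, yhat μ = kappaCoord a μ _ _ := fun μ => by rw [hyhat, hT', hS']; rfl
  have hXU := PowerSeries.X_mul_divX_one_sub (PowerSeries.constantCoeff_bernoulli'PowerSeries ℂ)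
  refine ⟨fun μ ν => ?_, fun μ ν => ?_⟩
  · rw [hx, hy]
    exact lie_kappaCoord_eq_zero_of a (PowerSeries.bernoulli'PowerSeries_eq_add_X ℂ)
      (PowerSeries.X_mul_divX_one_sub (PowerSeries.constantCoeff_bernoulliPowerSeries ℂ)) hXU
      (PowerSeries.derivative_bernoulliPowerSeries ℂ) μ ν
  · simp only [hy]
    exact lie_kappaCoord_self_of a hXU (PowerSeries.derivative_bernoulli'PowerSeries ℂ) μ ν

end
end
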